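/- arXiv:1107.0518 — 2 statements merged into one kernel-verified Lean document; each statement's English description precedes it below -/
import Mathlib

section
/- Let W_G be a Weyl group with parabolic subgroup W_L corresponding to I ⊆ Π, and let u, v be minimal length coset representatives of W_L·u and W_L·v. Let s be a simple reflection with ℓ(us) ≤ ℓ(u) and ℓ(vs) ≤ ℓ(v). Then the following are equivalent: (1) W_L·u ≤ W_L·v; (2) W_L·us ≤ W_L·v; (3) W_L·us ≤ W_L·vs. (Property Z for parabolic Bruhat order.) -/
open CoxeterSystem

/-- A Weyl group `W` (presented as a Coxeter system) acting on a vector space `V`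
with a distinguished system of roots whose simple roots form a basis. -/
structure WeylRootData (B W V : Type) [Group W] [AddCommGroup V] [Module ℝ V] where
  /-- The Coxeter matrix. -/
  M : CoxeterMatrix B
  /-- The Coxeter system structure on `W`. -/
  cs : CoxeterSystem M W
  /-- The simple roots, forming a basis of `V`. -/
  basis : Module.Basis B ℝ V
  /-- The action of `W` on `V`. -/
  act : W →* (V ≃ₗ[ℝ] V)
  /-- The set of roots. -/
  IsRoot : V → Prop
  isRoot_simple : ∀ i, IsRoot (basis i)
  isRoot_neg : ∀ v, IsRoot v → IsRoot (-v)
  isRoot_act : ∀ (w : W) (v : V), IsRoot v → IsRoot (act w v)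
  root_pos_or_neg : ∀ v, IsRoot v →
    (∀ i, 0 ≤ basis.repr v i) ∨ (∀ i, basis.repr v i ≤ 0)
  root_ne_zero : ∀ v, IsRoot v → v ≠ 0
  /-- The reflection associated to each root. -/
  refl : V → W
  refl_simple : ∀ i, refl (basis i) = cs.simple i
  refl_neg : ∀ v, refl (-v) = refl v
  refl_conj : ∀ (w : W) (v : V), IsRoot v → refl (act w v) = w * refl v * w⁻¹
  refl_isReflection : ∀ v, IsRoot v → cs.IsReflection (refl v)
  act_refl_self : ∀ v, IsRoot v → act (refl v) v = -v
  /-- The standard fact for simple roots: `ℓ(w sᵢ) = ℓ(w) + 1` iff `w(αᵢ) > 0`. -/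
  length_simple_iff : ∀ (w : W) (i : B),
      cs.length (w * cs.simple i) = cs.length w + 1 ↔
        ∀ j, 0 ≤ basis.repr (act w (basis i)) j

namespace WeylRootData

variable {B W V : Type} [Group W] [AddCommGroup V] [Module ℝ V]
variable (D : WeylRootData B W V)

/-- `v` is a positive root. -/
def IsPos (v : V) : Prop := D.IsRoot v ∧ ∀ i, 0 ≤ D.basis.repr v i

/-- `v` is a negative root. -/
def IsNeg (v : V) : Prop := D.IsRoot v ∧ ∀ i, D.basis.repr v i ≤ 0

/-- Bruhat order on `W`: generated by multiplying by reflections while increasing length. -/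
def bruhatLE : W → W → Prop :=
  Relation.ReflTransGen (fun u v =>
    ∃ t, D.cs.IsReflection t ∧ v = u * t ∧ D.cs.length u < D.cs.length v)

/-- The standard parabolic subgroup `W_L` generated by the simple reflections in `I`. -/
def WL (I : Set B) : Subgroup W := Subgroup.closure (D.cs.simple '' I)

/-- `u` and `v` lie in the same coset `W_L·u = W_L·v`. -/
def cosetEq (I : Set B) (u v : W) : Prop := ∃ x ∈ D.WL I, v = x * u

/-- Induced Bruhat order on `W_L\W`: some coset representatives are comparable. -/
def cosetLE (I : Set B) (u v : W) : Prop :=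
  ∃ x ∈ D.WL I, ∃ y ∈ D.WL I, D.bruhatLE (x * u) (y * v)

/-- Strict induced Bruhat order on `W_L\W`. -/
def cosetLT (I : Set B) (u v : W) : Prop := D.cosetLE I u v ∧ ¬ D.cosetEq I u v

/-- `u` has minimal length in its coset `W_L·u` (P-minimal). -/
def IsMinRep (I : Set B) (u : W) : Prop :=
  ∀ x ∈ D.WL I, D.cs.length u ≤ D.cs.length (x * u)

/-- `u` has maximal length in its coset `W_L·u` (P-maximal). -/
def IsMaxRep (I : Set B) (u : W) : Prop :=
  ∀ x ∈ D.WL I, D.cs.length (x * u) ≤ D.cs.length u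

/-- The span of the simple roots in `I`. -/
def spanL (I : Set B) : Submodule ℝ V := Submodule.span ℝ (D.basis '' I)

/-- `v ∈ Δ(𝔩)`: a root in the span of the simple roots in `I`. -/
def InL (I : Set B) (v : V) : Prop := D.IsRoot v ∧ v ∈ D.spanL I

/-- `v ∈ Δ(𝔫)`: a positive root not in the span of `I`. -/
def InN (I : Set B) (v : V) : Prop := D.IsPos v ∧ v ∉ D.spanL I

/-- `v ∈ Δ(𝔫⁻)`: a negative root not in the span of `I`. -/
def InNneg (I : Set B) (v : V) : Prop := D.IsNeg v ∧ v ∉ D.spanL I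

end WeylRootData

/-!
If `u` is minimal in `W_L u`, lengths add over the coset: `ℓ (x u) = ℓ x + ℓ u` for `x ∈ W_L`.
Hence `u` lies below every element of its coset, and `W_L u ≤ W_L v` just says `u ≤ y v` for some
`y ∈ W_L`. As `v s` is minimal too, lengths also add over `W_L (v s)`, so `s` is a right descent of
every `y v`. The three statements thereby become Deodhar's Property Z for the Bruhat order of `W`:
if `x s < x` and `w s < w`, then `x ≤ w ↔ x s ≤ w ↔ x s ≤ w s`, a consequence of the lifting
property.

Lifting and the additivity of lengths both rest on the strong exchange condition, proved with the
reflection cocycle: `sᵢ` acts on `W × {±1}` by conjugating the first entry and flipping the sign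
exactly at `sᵢ`. These involutions satisfy the Coxeter relations, and the sign that `w` attaches to
`t` is `-1` to the number of occurrences of `t` in the right inversion sequence of any word for `w`,
and equals `-1` whenever `ℓ (w t) < ℓ w`.
-/

namespace CoxeterSystem

variable {B W : Type*} [Group W] {M : CoxeterMatrix B} (cs : CoxeterSystem M W)

local prefix:100 "s" => cs.simple
local prefix:100 "π" => cs.wordProd
local prefix:100 "ℓ" => cs.length

section InversionSign

open scoped Classical

noncomputable def signedConj (i : B) : Equiv.Perm (W × ℤˣ) :=
  Function.Involutive.toPerm (fun x => (s i * x.1 * s i, x.2 * if x.1 = s i then -1 else 1)) <| by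
    rintro ⟨t, e⟩
    have hconj : s i * (s i * t * s i) * s i = t := by
      simp only [mul_assoc, cs.simple_mul_simple_cancel_left, cs.simple_mul_simple_self, mul_one]
    have hfix : s i * t * s i = s i ↔ t = s i := by
      constructor
      · intro h; rw [← hconj, h, cs.simple_mul_simple_self, one_mul]
      · rintro rfl; rw [cs.simple_mul_simple_self, one_mul]
    by_cases h : t = s i <;> simp [hconj, hfix, h]

lemma signedConj_apply (i : B) (t : W) (e : ℤˣ) :
    cs.signedConj i (t, e) = (s i * t * s i, e * if t = s i then -1 else 1) :=
  rfl

lemma inv_pow_mul_simple_mul_pow (i j : B) (m : ℕ) :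
    ((s i * s j) ^ m)⁻¹ * s j * (s i * s j) ^ m = (s i * s j)⁻¹ ^ (2 * m) * s j := by
  have hconj : s j * (s i * s j) * s j = (s i * s j)⁻¹ := by
    simp [mul_assoc, cs.inv_simple, cs.simple_mul_simple_self]
  have hpow : s j * (s i * s j) ^ m = (s i * s j)⁻¹ ^ m * s j := by
    calc s j * (s i * s j) ^ m = (s j * (s i * s j) * (s j)⁻¹) ^ m * s j := by
          rw [conj_pow]; group
      _ = (s i * s j)⁻¹ ^ m * s j := by rw [cs.inv_simple, hconj]
  rw [mul_assoc, hpow, ← mul_assoc, ← inv_pow, ← pow_add, two_mul]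

lemma signedConj_mul_pow_apply (i j : B) (m : ℕ) (t : W) (e : ℤˣ) :
    ((cs.signedConj i * cs.signedConj j) ^ m) (t, e) =
      ((s i * s j) ^ m * t * ((s i * s j) ^ m)⁻¹,
        e * ∏ n ∈ Finset.range (2 * m),
          if t = (s i * s j)⁻¹ ^ n * s j then -1 else 1) := by
  induction m with
  | zero => simp
  | succ m ih =>
    set q := s i * s j with hq
    have hconj : ∀ g x y : W, g * x * g⁻¹ = y ↔ x = g⁻¹ * y * g := fun g x y => by
      constructor <;> rintro rfl <;> group
    have h₁ : q ^ m * t * (q ^ m)⁻¹ = s j ↔ t = q⁻¹ ^ (2 * m) * s j := by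
      rw [hconj, cs.inv_pow_mul_simple_mul_pow]
    have h₂ : s j * (q ^ m * t * (q ^ m)⁻¹) * s j = s i ↔ t = q⁻¹ ^ (2 * m + 1) * s j := by
      have hs := hconj (s j) (q ^ m * t * (q ^ m)⁻¹) (s i)
      rw [cs.inv_simple] at hs
      rw [hs, show s j * s i * s j = q⁻¹ * s j by simp [hq, cs.inv_simple, mul_assoc], hconj,
        show (q ^ m)⁻¹ * (q⁻¹ * s j) * q ^ m = q⁻¹ * ((q ^ m)⁻¹ * s j * q ^ m) by group,
        cs.inv_pow_mul_simple_mul_pow, ← mul_assoc, ← pow_succ']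
    rw [pow_succ', Equiv.Perm.mul_apply, ih, Equiv.Perm.mul_apply, signedConj_apply,
      signedConj_apply, Nat.mul_succ, Finset.prod_range_succ, Finset.prod_range_succ, h₁, h₂]
    simp only [hq, pow_succ', mul_inv_rev, cs.inv_simple, mul_assoc]

lemma isLiftable_signedConj : M.IsLiftable cs.signedConj := by
  intro i j
  ext1 ⟨t, e⟩
  set q := s i * s j
  have hperiod : ∀ n, q⁻¹ ^ (M i j + n) = q⁻¹ ^ n := fun n => by
    rw [pow_add, inv_pow, cs.simple_mul_simple_pow, inv_one, one_mul]
  have hsign :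
      (∏ n ∈ Finset.range (2 * M i j), if t = q⁻¹ ^ n * s j then (-1 : ℤˣ) else 1) = 1 := by
    simp only [two_mul, Finset.prod_range_add, hperiod, Int.units_mul_self]
  rw [signedConj_mul_pow_apply, hsign, cs.simple_mul_simple_pow]
  simp

noncomputable def signedConjRep : W →* Equiv.Perm (W × ℤˣ) :=
  cs.lift ⟨cs.signedConj, cs.isLiftable_signedConj⟩

noncomputable def inversionSign (w t : W) : ℤˣ := (cs.signedConjRep w (t, 1)).2

lemma signedConjRep_simple (i : B) : cs.signedConjRep (s i) = cs.signedConj i :=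
  cs.lift_apply_simple cs.isLiftable_signedConj i

lemma signedConjRep_apply (w t : W) (e : ℤˣ) :
    cs.signedConjRep w (t, e) = (w * t * w⁻¹, e * cs.inversionSign w t) := by
  induction w using cs.simple_induction_left generalizing t e with
  | one => simp [inversionSign]
  | mul_simple_left w i ih =>
    have key : ∀ e, cs.signedConjRep (s i * w) (t, e) = (s i * (w * t * w⁻¹) * s i,
        e * cs.inversionSign w t * if w * t * w⁻¹ = s i then -1 else 1) := fun e => by
      rw [map_mul, Equiv.Perm.mul_apply, ih, signedConjRep_simple, signedConj_apply]
    rw [inversionSign, key, key]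
    simp [mul_assoc, cs.inv_simple]

lemma inversionSign_one (t : W) : cs.inversionSign 1 t = 1 := by
  simp [inversionSign]

lemma inversionSign_mul (w w' t : W) :
    cs.inversionSign (w * w') t = cs.inversionSign w' t * cs.inversionSign w (w' * t * w'⁻¹) := by
  change (cs.signedConjRep (w * w') (t, 1)).2 = _
  rw [map_mul, Equiv.Perm.mul_apply, signedConjRep_apply, signedConjRep_apply, one_mul]

lemma inversionSign_simple (i : B) (t : W) :
    cs.inversionSign (s i) t = if t = s i then -1 else 1 := by
  simp [inversionSign, signedConjRep_simple, signedConj_apply]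

lemma inversionSign_self {t : W} (ht : cs.IsReflection t) : cs.inversionSign t t = -1 := by
  obtain ⟨r, k, rfl⟩ := ht
  have hconj : r⁻¹ * (r * s k * r⁻¹) * r⁻¹⁻¹ = s k := by group
  have hcancel := cs.inversionSign_mul r r⁻¹ (r * s k * r⁻¹)
  rw [mul_inv_cancel, inversionSign_one, hconj] at hcancel
  calc cs.inversionSign (r * s k * r⁻¹) (r * s k * r⁻¹)
      = cs.inversionSign (r * (s k * r⁻¹)) (r * s k * r⁻¹) := by rw [← mul_assoc]
    _ = cs.inversionSign r⁻¹ (r * s k * r⁻¹) * cs.inversionSign (s k) (s k) *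
          cs.inversionSign r (s k) := by
      rw [inversionSign_mul, inversionSign_mul, hconj,
        show s k * r⁻¹ * (r * s k * r⁻¹) * (s k * r⁻¹)⁻¹ = s k by group]
    _ = -1 := by rw [inversionSign_simple, if_pos rfl, mul_right_comm, ← hcancel, one_mul]

lemma inversionSign_wordProd (ω : List B) (t : W) :
    cs.inversionSign (π ω) t = (-1) ^ (cs.rightInvSeq ω).count t := by
  induction ω with
  | nil => simp [inversionSign_one]
  | cons a ω ih =>
    have hris : cs.rightInvSeq (a :: ω) = ((π ω)⁻¹ * s a * π ω) :: cs.rightInvSeq ω := rfl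
    have hcond : π ω * t * (π ω)⁻¹ = s a ↔ (π ω)⁻¹ * s a * π ω = t := by
      constructor <;> intro h <;> rw [← h] <;> group
    rw [cs.wordProd_cons, inversionSign_mul, ih, inversionSign_simple, hcond, hris,
      List.count_cons]
    by_cases h : (π ω)⁻¹ * s a * π ω = t <;> simp [h, pow_succ]

lemma inversionSign_of_isRightInversion {w t : W} (h : cs.IsRightInversion w t) :
    cs.inversionSign w t = -1 := by
  obtain ⟨τ, hτ, hwt⟩ := cs.exists_isReduced (w * t)
  have hnot : t ∉ cs.rightInvSeq τ := fun hmem => by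
    have := (cs.isRightInversion_of_mem_rightInvSeq hτ hmem).2
    rw [← hwt, mul_assoc, h.1.mul_self, mul_one] at this
    exact absurd h.2 (not_lt.mpr this.le)
  have hsplit := cs.inversionSign_mul (w * t) t t
  have hw : w * t * t = w := by rw [mul_assoc, h.1.mul_self, mul_one]
  have ht : t * t * t⁻¹ = t := by rw [h.1.mul_self, one_mul, h.1.inv]
  rw [hw, ht, hwt,
    inversionSign_wordProd, List.count_eq_zero.mpr hnot, pow_zero, mul_one] at hsplit
  rw [hsplit, inversionSign_self cs h.1]

theorem mem_rightInvSeq_of_isRightInversion {ω : List B} {t : W}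
    (h : cs.IsRightInversion (π ω) t) : t ∈ cs.rightInvSeq ω := by
  by_contra hmem
  have hsign := cs.inversionSign_of_isRightInversion h
  rw [inversionSign_wordProd, List.count_eq_zero.mpr hmem, pow_zero] at hsign
  exact absurd hsign (by decide)

/-- The strong exchange condition. -/
theorem exists_eraseIdx_of_isRightInversion {ω : List B} {t : W}
    (h : cs.IsRightInversion (π ω) t) : ∃ j < ω.length, π ω * t = π (ω.eraseIdx j) := by
  obtain ⟨j, hj, rfl⟩ := List.mem_iff_getElem.mp (cs.mem_rightInvSeq_of_isRightInversion h)
  rw [length_rightInvSeq] at hj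
  refine ⟨j, hj, ?_⟩
  rw [← List.getD_eq_getElem _ 1, wordProd_mul_getD_rightInvSeq]

end InversionSign

def bruhatStep (u v : W) : Prop := ∃ t, cs.IsReflection t ∧ v = u * t ∧ ℓ u < ℓ v

/-- `WeylRootData.bruhatLE D` unfolds to `D.cs.bruhatLE`. -/
def bruhatLE : W → W → Prop := Relation.ReflTransGen cs.bruhatStep

local infix:50 " ≤ᴮ " => cs.bruhatLE

variable {cs}

lemma bruhatStep_mul_simple {x : W} {i : B} (h : ℓ x < ℓ (x * s i)) :
    cs.bruhatStep x (x * s i) :=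
  ⟨s i, cs.isReflection_simple i, rfl, h⟩

lemma bruhatStep_of_isRightDescent {w : W} {i : B} (h : cs.IsRightDescent w i) :
    cs.bruhatStep (w * s i) w :=
  ⟨s i, cs.isReflection_simple i, (cs.simple_mul_simple_cancel_right i).symm, h⟩

lemma bruhatStep_simple_mul {x : W} {i : B} (h : ℓ x < ℓ (s i * x)) :
    cs.bruhatStep x (s i * x) :=
  ⟨x⁻¹ * s i * x, by simpa using (cs.isReflection_simple i).conj x⁻¹, by group, h⟩

lemma bruhatStep_mul_simple_of_isReflection {x t : W} (ht : cs.IsReflection t) {i : B}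
    (h : ℓ (x * s i) < ℓ (x * t * s i)) : cs.bruhatStep (x * s i) (x * t * s i) :=
  ⟨s i * t * s i, by simpa [cs.inv_simple] using ht.conj (s i),
    by simp [mul_assoc, cs.simple_mul_simple_cancel_left], h⟩

lemma mul_eq_or_length_mul_mul_simple_lt {w t : W} (ht : cs.IsRightInversion w t) (i : B) :
    w * t = w * s i ∨ ℓ (w * t * s i) < ℓ (w * s i) := by
  obtain ⟨τ, hτ, hws⟩ := cs.exists_isReduced (w * s i)
  have hw_eq : π (τ ++ [i]) = w := by
    rw [cs.wordProd_append, cs.wordProd_singleton, ← hws, cs.simple_mul_simple_cancel_right]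
  rw [← hw_eq] at ht
  obtain ⟨j, hj, hwt⟩ := cs.exists_eraseIdx_of_isRightInversion ht
  rw [hw_eq] at hwt
  rcases lt_or_ge j τ.length with hjτ | hjτ
  · right
    rw [List.eraseIdx_append_of_lt_length hjτ, cs.wordProd_append, cs.wordProd_singleton] at hwt
    rw [hwt, cs.simple_mul_simple_cancel_right, hws, hτ.eq]
    have := List.length_eraseIdx_add_one hjτ
    have := cs.length_wordProd_le (τ.eraseIdx j)
    omega
  · left
    have hj' : j = τ.length := by simp at hj; omega
    rw [hwt, hj', List.eraseIdx_append_of_length_le le_rfl]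
    simp [hws]

theorem bruhatLE_lifting {u w : W} {i : B} (h : u ≤ᴮ w) (hu : ℓ u < ℓ (u * s i)) :
    (cs.IsRightDescent w i → u * s i ≤ᴮ w ∧ u ≤ᴮ w * s i) ∧
      (ℓ w < ℓ (w * s i) → u * s i ≤ᴮ w * s i) := by
  induction h with
  | refl => exact ⟨fun hu' => absurd hu' hu.not_gt, fun _ => .refl⟩
  | @tail w₁ w huw₁ hstep ih =>
    obtain ⟨t, ht, rfl, hlt⟩ := hstep
    have hlen₁ := cs.length_mul_simple w₁ i
    have hlen := cs.length_mul_simple (w₁ * t) i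
    rcases lt_or_gt_of_ne (cs.length_mul_simple_ne w₁ i) with hd | ha
    · obtain ⟨hus₁, hu₁⟩ := ih.1 hd
      refine ⟨fun hw => ⟨hus₁.tail ⟨t, ht, rfl, hlt⟩, hu₁.tail ?_⟩,
        fun ha => (hus₁.tail ⟨t, ht, rfl, hlt⟩).tail (bruhatStep_mul_simple ha)⟩
      exact bruhatStep_mul_simple_of_isReflection ht (by omega)
    · have hus₁ := ih.2 ha
      refine ⟨fun hw => ?_,
        fun _ => hus₁.tail (bruhatStep_mul_simple_of_isReflection ht (by omega))⟩
      have hinv : cs.IsRightInversion (w₁ * t) t := by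
        refine ⟨ht, ?_⟩
        rwa [mul_assoc, ht.mul_self, mul_one]
      have hcancel : w₁ * t * t = w₁ := by rw [mul_assoc, ht.mul_self, mul_one]
      have hdown := bruhatStep_of_isRightDescent hw
      rcases mul_eq_or_length_mul_mul_simple_lt hinv i with heq | hlt'
      · rw [hcancel] at heq
        have hw₁s : w₁ * s i = w₁ * t := by
          conv_lhs => rw [heq]
          exact cs.simple_mul_simple_cancel_right i
        rw [← heq]
        exact ⟨hw₁s ▸ hus₁, huw₁⟩
      · rw [hcancel] at hlt'
        have hstep := bruhatStep_mul_simple_of_isReflection ht hlt'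
        exact ⟨(hus₁.tail hstep).tail hdown, (huw₁.tail (bruhatStep_mul_simple ha)).tail hstep⟩

theorem bruhatLE_iff_mul_simple_bruhatLE {x w : W} {i : B} (hx : cs.IsRightDescent x i)
    (hw : cs.IsRightDescent w i) : x ≤ᴮ w ↔ x * s i ≤ᴮ w := by
  refine ⟨.head (bruhatStep_of_isRightDescent hx), fun h => ?_⟩
  have hlift := (bruhatLE_lifting h (by rwa [cs.simple_mul_simple_cancel_right])).1 hw
  rw [cs.simple_mul_simple_cancel_right] at hlift
  exact hlift.1

theorem mul_simple_bruhatLE_iff {x w : W} {i : B} (hx : cs.IsRightDescent x i)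
    (hw : cs.IsRightDescent w i) : x * s i ≤ᴮ w ↔ x * s i ≤ᴮ w * s i :=
  ⟨fun h => ((bruhatLE_lifting h (by rwa [cs.simple_mul_simple_cancel_right])).1 hw).2,
    fun h => h.tail (bruhatStep_of_isRightDescent hw)⟩

theorem isLeftInversion_or_of_isLeftInversion_mul {x u t : W}
    (h : cs.IsLeftInversion (x * u) t) :
    cs.IsLeftInversion x t ∨ ℓ (x⁻¹ * t * x * u) < ℓ u := by
  obtain ⟨ρ, hρ, rfl⟩ := cs.exists_isReduced x
  obtain ⟨σ, hσ, rfl⟩ := cs.exists_isReduced u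
  have hconj : π ρ * π σ * ((π ρ * π σ)⁻¹ * t * (π ρ * π σ)) = t * (π ρ * π σ) := by group
  have hright : cs.IsRightInversion (π (ρ ++ σ)) ((π ρ * π σ)⁻¹ * t * (π ρ * π σ)) := by
    rw [cs.wordProd_append]
    exact ⟨by simpa using h.1.conj (π ρ * π σ)⁻¹, hconj ▸ h.2⟩
  obtain ⟨j, hj, hexch⟩ := cs.exists_eraseIdx_of_isRightInversion hright
  rw [cs.wordProd_append, hconj] at hexch
  rcases lt_or_ge j ρ.length with hjρ | hjρ
  · rw [List.eraseIdx_append_of_lt_length hjρ, cs.wordProd_append, ← mul_assoc] at hexch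
    have hlen := List.length_eraseIdx_add_one hjρ
    have hle := cs.length_wordProd_le (ρ.eraseIdx j)
    refine .inl ⟨h.1, ?_⟩
    rw [mul_right_cancel hexch, hρ.eq]
    omega
  · rw [List.eraseIdx_append_of_length_le hjρ, cs.wordProd_append] at hexch
    have hdel : (π ρ)⁻¹ * t * π ρ * π σ = π (σ.eraseIdx (j - ρ.length)) := by
      rw [show (π ρ)⁻¹ * t * π ρ * π σ = (π ρ)⁻¹ * (t * (π ρ * π σ)) by group, hexch]
      group
    have hjσ : j - ρ.length < σ.length := by simp at hj; omega
    have hlen := List.length_eraseIdx_add_one hjσ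
    have hle := cs.length_wordProd_le (σ.eraseIdx (j - ρ.length))
    refine .inr ?_
    rw [hdel, hσ.eq]
    omega

theorem length_mul_eq_add_of_minimal {I : Set B} {u x : W}
    (hu : ∀ y ∈ Subgroup.closure (cs.simple '' I), ℓ u ≤ ℓ (y * u))
    (hx : x ∈ Subgroup.closure (cs.simple '' I)) : ℓ (x * u) = ℓ x + ℓ u := by
  have step : ∀ a ∈ I, ∀ y ∈ Subgroup.closure (cs.simple '' I),
      ℓ (y * u) = ℓ y + ℓ u → ℓ (s a * y * u) = ℓ (s a * y) + ℓ u := by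
    intro a ha y hy hyu
    have h₁ := cs.length_simple_mul y a
    have h₂ := cs.length_simple_mul (y * u) a
    have h₃ := cs.length_mul_le (s a * y) u
    rw [mul_assoc] at h₃ ⊢
    rcases h₁ with h₁ | h₁
    · rcases h₂ with h₂ | h₂
      · omega
      · exfalso
        rcases isLeftInversion_or_of_isLeftInversion_mul
          (x := y) (u := u) ⟨cs.isReflection_simple a, by omega⟩ with hinv | hinv
        · exact absurd hinv.2 (by omega)
        · have hmem : y⁻¹ * s a * y ∈ Subgroup.closure (cs.simple '' I) :=
            mul_mem (mul_mem (inv_mem hy) (Subgroup.subset_closure ⟨a, ha, rfl⟩)) hy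
          exact absurd (hu _ hmem) (not_le.mpr hinv)
    · omega
  induction hx using Subgroup.closure_induction_left with
  | one => simp
  | mul_left _ hs y hy ih =>
    obtain ⟨a, ha, rfl⟩ := hs
    exact step a ha y hy ih
  | inv_mul_cancel _ hs y hy ih =>
    obtain ⟨a, ha, rfl⟩ := hs
    rw [cs.inv_simple]
    exact step a ha y hy ih

theorem bruhatLE_wordProd_mul {u : W} (ω : List B) (h : ℓ (π ω * u) = ω.length + ℓ u) :
    u ≤ᴮ π ω * u := by
  induction ω with
  | nil =>
    rw [cs.wordProd_nil, one_mul]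
    exact .refl
  | cons a ω ih =>
    rw [List.length_cons] at h
    rw [cs.wordProd_cons, mul_assoc] at h ⊢
    have h₁ := cs.length_simple_mul (π ω * u) a
    have h₂ := cs.length_mul_le (π ω) u
    have h₃ := cs.length_wordProd_le ω
    exact (ih (by omega)).tail (bruhatStep_simple_mul (by omega))

theorem bruhatLE_mul_of_length_mul_eq_add {x u : W} (h : ℓ (x * u) = ℓ x + ℓ u) :
    u ≤ᴮ x * u := by
  obtain ⟨ω, hω, rfl⟩ := cs.exists_isReduced x
  exact bruhatLE_wordProd_mul ω (hω.eq ▸ h)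

end CoxeterSystem

namespace WeylRootData

variable {B W V : Type} [Group W] [AddCommGroup V] [Module ℝ V] {D : WeylRootData B W V}
  {I : Set B} {u : W}

theorem IsMinRep.length_mul (hu : D.IsMinRep I u) {x : W} (hx : x ∈ D.WL I) :
    D.cs.length (x * u) = D.cs.length x + D.cs.length u :=
  D.cs.length_mul_eq_add_of_minimal hu hx

theorem IsMinRep.mul_simple (hu : D.IsMinRep I u) {i : B} (hi : D.cs.IsRightDescent u i) :
    D.IsMinRep I (u * D.cs.simple i) := by
  intro x hx
  have h₁ := hu.length_mul hx
  have h₂ := D.cs.length_mul_simple (x * u) i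
  rw [← mul_assoc]
  unfold CoxeterSystem.IsRightDescent at hi
  omega

theorem cosetLE_iff_of_isMinRep (hu : D.IsMinRep I u) (v : W) :
    D.cosetLE I u v ↔ ∃ y ∈ D.WL I, D.cs.bruhatLE u (y * v) := by
  refine ⟨fun ⟨x, hx, y, hy, h⟩ => ⟨y, hy, ?_⟩,
    fun ⟨y, hy, h⟩ => ⟨1, one_mem _, y, hy, by rwa [one_mul]⟩⟩
  exact (D.cs.bruhatLE_mul_of_length_mul_eq_add (hu.length_mul hx)).trans h

end WeylRootData

/-- Property Z for parabolic Bruhat order: for minimal length coset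
representatives `u, v` and a simple reflection `s` with `ℓ(us) ≤ ℓ(u)`, `ℓ(vs) ≤ ℓ(v)`:
`W_L·u ≤ W_L·v ⟺ W_L·us ≤ W_L·v ⟺ W_L·us ≤ W_L·vs`. -/
theorem stmt7 {B W V : Type} [Group W] [AddCommGroup V] [Module ℝ V]
    (D : WeylRootData B W V) (I : Set B) (u v : W)
    (hu : D.IsMinRep I u) (hv : D.IsMinRep I v) (i : B)
    (hus : D.cs.length (u * D.cs.simple i) ≤ D.cs.length u)
    (hvs : D.cs.length (v * D.cs.simple i) ≤ D.cs.length v) :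
    (D.cosetLE I u v ↔ D.cosetLE I (u * D.cs.simple i) v) ∧
    (D.cosetLE I (u * D.cs.simple i) v ↔
      D.cosetLE I (u * D.cs.simple i) (v * D.cs.simple i)) := by
  have hu_desc : D.cs.IsRightDescent u i := lt_of_le_of_ne hus (D.cs.length_mul_simple_ne u i)
  have hv_desc : D.cs.IsRightDescent v i := lt_of_le_of_ne hvs (D.cs.length_mul_simple_ne v i)
  have hus_min := hu.mul_simple hu_desc
  -- `s` stays a right descent on the whole coset `W_L v`, as `v s` is minimal as well.
  have hyv_desc : ∀ y ∈ D.WL I, D.cs.IsRightDescent (y * v) i := fun y hy => by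
    unfold CoxeterSystem.IsRightDescent
    rw [mul_assoc, (hv.mul_simple hv_desc).length_mul hy, hv.length_mul hy]
    exact Nat.add_lt_add_left hv_desc _
  rw [D.cosetLE_iff_of_isMinRep hu, D.cosetLE_iff_of_isMinRep hus_min,
    D.cosetLE_iff_of_isMinRep hus_min]
  constructor <;> refine exists_congr fun y => and_congr_right fun hy => ?_
  · exact D.cs.bruhatLE_iff_mul_simple_bruhatLE hu_desc (hyv_desc y hy)
  · rw [← mul_assoc]
    exact D.cs.mul_simple_bruhatLE_iff hu_desc (hyv_desc y hy)
end

section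
/- Let W be a Weyl group, I ⊆ Π, W_L the corresponding parabolic subgroup, and α ∈ Π \ I. If β = w(α) for some w ∈ W_L and β is a simple root, then β = α. -/
open CoxeterSystem

/-!
The relation `s_j = w s_i w⁻¹` follows from the reflection axioms of the root datum, and it can
be transported to the geometric (Tits) representation of the Coxeter system, where the simple
reflections are known explicitly. There `β := w(e_i)` satisfies `s_j β = -β`, so `β` is a multiple
of `e_j`. On the other hand every element of `W_I` moves each vector by an element of the span of
`{e_γ : γ ∈ I}`, so the `e_i`-coordinate of `β` is `1`, which forces `j = i`.
-/

namespace Module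

open Polynomial.Chebyshev

variable {R M : Type*} [CommRing R] [AddCommGroup M] [Module R M]
  {x y : M} {f g : Dual R M} (hf : f x = 2) (hg : g y = 2)

/- Unlike `reflection_mul_reflection_pow_apply` (Chebyshev polynomials at `f y * g x - 2`), this
symmetric version uses the parameter `a` itself, so `(r₁ r₂) ^ n = 1` reduces to one vanishing
condition. -/
lemma reflection_mul_reflection_pow_apply_of_symm (a : R) (hfy : f y = -a) (hgx : g x = -a)
    (n : ℕ) (z : M) :
    ((reflection hf * reflection hg) ^ n) z =
      z - ((S R (n - 1)).eval a * ((S R (n - 1)).eval a * f z + (S R n).eval a * g z)) • x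
        - ((S R (n - 1)).eval a * ((S R (n - 2)).eval a * f z + (S R (n - 1)).eval a * g z)) • y := by
  induction n with
  | zero => simp
  | succ n ih =>
    have hprev := congrArg (Polynomial.eval a) (S_sub_two R (n : ℤ))
    have hnext := congrArg (Polynomial.eval a) (S_add_one R (n : ℤ))
    have hsq := congrArg (Polynomial.eval a) (S_sq_add_S_sq R ((n : ℤ) - 1))
    simp only [Polynomial.eval_sub, Polynomial.eval_add, Polynomial.eval_mul, Polynomial.eval_X,
      Polynomial.eval_pow, Polynomial.eval_one, sub_add_cancel] at hprev hnext hsq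
    rw [pow_succ', LinearEquiv.mul_apply, ih, LinearEquiv.mul_apply]
    simp only [reflection_apply, map_sub, map_smul, hf, hg, hfy, hgx]
    push_cast
    simp only [add_sub_cancel_right, show (n : ℤ) + 1 - 2 = n - 1 by ring]
    set q := (S R (n - 1)).eval a
    set r := (S R n).eval a
    match_scalars
    · ring
    · linear_combination (f z + g z * a) * hsq + f z * a * q * hprev + g z * r * hnext
    · linear_combination g z * hsq + q * f z * hprev

lemma reflection_mul_reflection_pow_eq_one_of_symm (a : R) (hfy : f y = -a) (hgx : g x = -a)
    (n : ℕ) (hn : (S R (n - 1)).eval a = 0) :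
    (reflection hf * reflection hg) ^ n = 1 := by
  ext z
  simp [reflection_mul_reflection_pow_apply_of_symm hf hg a hfy hgx, hn]

end Module

namespace CoxeterMatrix

open Real Polynomial.Chebyshev

variable {B : Type*} (M : CoxeterMatrix B)

/- For `M b c = 0` (infinite order) the junk value `π / 0 = 0` gives the entry `-2`, which is the
correct one. -/
noncomputable def geometricCoroot (b : B) : Module.Dual ℝ (B →₀ ℝ) :=
  Finsupp.linearCombination ℝ fun c => -2 * cos (π / M b c)

lemma geometricCoroot_single (b c : B) :
    M.geometricCoroot b (Finsupp.single c 1) = -2 * cos (π / M b c) := by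
  simp [geometricCoroot]

lemma geometricCoroot_single_self (b : B) : M.geometricCoroot b (Finsupp.single b 1) = 2 := by
  simp [geometricCoroot_single]

noncomputable def geometricReflection (b : B) : (B →₀ ℝ) ≃ₗ[ℝ] (B →₀ ℝ) :=
  Module.reflection (M.geometricCoroot_single_self b)

lemma geometricReflection_apply (b : B) (v : B →₀ ℝ) :
    M.geometricReflection b v = v - M.geometricCoroot b v • Finsupp.single b 1 :=
  Module.reflection_apply _ _


theorem isLiftable_geometricReflection : M.IsLiftable M.geometricReflection := by
  intro b c
  rcases eq_or_ne b c with rfl | hbc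
  · rw [M.diagonal, pow_one]
    exact mul_eq_one_iff_eq_inv.mpr (Module.reflection_inv _).symm
  obtain hm | hm : M b c = 0 ∨ 2 ≤ M b c := by
    have := M.off_diagonal b c hbc
    omega
  · rw [hm, pow_zero]
  refine Module.reflection_mul_reflection_pow_eq_one_of_symm _ _ (2 * cos (π / M b c))
    (by rw [geometricCoroot_single]; ring) (by rw [geometricCoroot_single, M.symmetric]; ring) _ ?_
  have hm_pos : (0 : ℝ) < M b c := by exact_mod_cast (by omega : 0 < M b c)
  have hsin : sin (π / M b c) ≠ 0 := by
    refine (sin_pos_of_pos_of_lt_pi (div_pos pi_pos hm_pos) ?_).ne'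
    exact div_lt_self pi_pos (by exact_mod_cast (by omega : 1 < M b c))
  have h := S_two_mul_real_cos (π / M b c) ((M b c : ℤ) - 1)
  rw [Int.cast_sub, Int.cast_natCast, Int.cast_one, sub_add_cancel,
    mul_div_cancel₀ _ hm_pos.ne', sin_pi] at h
  exact (mul_eq_zero.mp h).resolve_right hsin

end CoxeterMatrix

lemma Subgroup.apply_sub_self_mem_of_mem_closure {G R V : Type*} [Group G] [Ring R]
    [AddCommGroup V] [Module R V] (ρ : G →* (V ≃ₗ[R] V)) (N : Submodule R V) {s : Set G}
    (hs : ∀ g ∈ s, ∀ v, ρ g v - v ∈ N) {g : G} (hg : g ∈ Subgroup.closure s) (v : V) :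
    ρ g v - v ∈ N := by
  induction hg using Subgroup.closure_induction generalizing v with
  | mem g hg => exact hs g hg v
  | one => simp
  | mul g h _ _ hg hh =>
    rw [map_mul, LinearEquiv.mul_apply, ← sub_add_sub_cancel _ (ρ h v)]
    exact N.add_mem (hg _) (hh v)
  | inv g _ hg =>
    have := N.neg_mem (hg (ρ g⁻¹ v))
    rwa [← LinearEquiv.mul_apply, ← map_mul, mul_inv_cancel, map_one, neg_sub] at this

namespace CoxeterSystem

variable {B W : Type*} {M : CoxeterMatrix B} [Group W] (cs : CoxeterSystem M W)

noncomputable def geometricRepresentation : W →* ((B →₀ ℝ) ≃ₗ[ℝ] (B →₀ ℝ)) :=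
  cs.lift ⟨M.geometricReflection, M.isLiftable_geometricReflection⟩

lemma geometricRepresentation_simple (b : B) :
    cs.geometricRepresentation (cs.simple b) = M.geometricReflection b :=
  cs.lift_apply_simple _ b

theorem eq_of_simple_eq_conj_of_mem_closure {I : Set B} {i j : B} (hi : i ∉ I) {w : W}
    (hw : w ∈ Subgroup.closure (cs.simple '' I)) (h : cs.simple j = w * cs.simple i * w⁻¹) :
    j = i := by
  set ρ := cs.geometricRepresentation
  set β := ρ w (Finsupp.single i 1)
  have hβ_sub : β - Finsupp.single i 1 ∈ Finsupp.supported ℝ ℝ I := by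
    refine Subgroup.apply_sub_self_mem_of_mem_closure ρ _ ?_ hw _
    rintro _ ⟨γ, hγ, rfl⟩ v
    rw [geometricRepresentation_simple, CoxeterMatrix.geometricReflection_apply, sub_sub_cancel_left]
    exact neg_mem (Submodule.smul_mem _ _ (Finsupp.single_mem_supported ℝ 1 hγ))
  have hβi : β i = 1 := by
    have := Finsupp.notMem_support_iff.mp fun h' => hi ((Finsupp.mem_supported _ _).mp hβ_sub h')
    simpa [sub_eq_zero] using this
  have hβ_neg : M.geometricReflection j β = -β := by
    rw [← cs.geometricRepresentation_simple, h, map_mul, map_mul, map_inv]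
    simp [β, ρ, geometricRepresentation_simple, CoxeterMatrix.geometricReflection]
  by_contra hji
  have hβi_neg : β i = -β i := by
    simpa [CoxeterMatrix.geometricReflection_apply, Finsupp.single_eq_of_ne' hji] using
      congrArg (· i) hβ_neg
  linarith

end CoxeterSystem

/-- For `α ∈ Π \ I` and `w ∈ W_L`, if `w(α)` is a simple root `β`
then `β = α`. -/
theorem stmt11 {B W V : Type} [Group W] [AddCommGroup V] [Module ℝ V]
    (D : WeylRootData B W V) (I : Set B) (i : B) (hi : i ∉ I)
    (w : W) (hw : w ∈ D.WL I) (j : B) (h : D.act w (D.basis i) = D.basis j) :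
    j = i := by
  have hconj := D.refl_conj w (D.basis i) (D.isRoot_simple i)
  rw [h, D.refl_simple, D.refl_simple] at hconj
  exact D.cs.eq_of_simple_eq_conj_of_mem_closure hi hw hconj
end
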